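/- With the same hypotheses (φ unital positive sending C[0,1]_{(a,k)} to C[0,1]_{(b,k)}, {X₁,…,Xₙ} a partition of [0,1] into connected Borel sets with 0 ∈ X₁, 1 ∈ Xₙ, μ₀ and μ₁ the induced measures at 0 and 1), one has μ₀(X₁) = (b/(b+k)) μ₁(X₁) + (a+k)/(b+k) and μ₀(Xₙ) = (b/(b+k)) μ₁(Xₙ) − a/(b+k). -/

import Mathlib

/-!
With `c = a/(a+k)` and `d = b/(b+k)`, the hypothesis on `φ` says that the kernel of the functional
`f ↦ f 0 - c f 1` lies in that of `f ↦ φ f 0 - d φ f 1`, so the latter is a multiple of the former;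
testing on `f = 1` identifies the multiple as `(1-d)/(1-c) = (a+k)/(b+k)`. Through `μ₀` and `μ₁` this
becomes the identity of finite measures `μ₀ + a/(b+k) δ₁ = d μ₁ + (a+k)/(b+k) δ₀`, which is
evaluated on `X₁ ∋ 0` and on `Xₙ ∋ 1`, each of which misses the other endpoint.
-/

open ContinuousMap MeasureTheory
open scoped NNReal ENNReal BoundedContinuousFunction

namespace ContinuousMap

variable {X Y : Type*} [TopologicalSpace X] [TopologicalSpace Y]

theorem exists_apply_sub_mul_apply_eq_mul (φ : C(X, ℝ) →ₗ[ℝ] C(Y, ℝ)) {x₀ x₁ : X} {y₀ y₁ : Y}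
    {c d : ℝ} (h : ∀ f, f x₀ = c * f x₁ → φ f y₀ = d * φ f y₁) :
    ∃ r : ℝ, ∀ f, φ f y₀ - d * φ f y₁ = r * (f x₀ - c * f x₁) := by
  let ℓ : C(X, ℝ) →ₗ[ℝ] ℝ := (evalCLM ℝ x₀ - c • evalCLM ℝ x₁ : C(X, ℝ) →L[ℝ] ℝ)
  let K : C(X, ℝ) →ₗ[ℝ] ℝ := (evalCLM ℝ y₀ - d • evalCLM ℝ y₁ : C(Y, ℝ) →L[ℝ] ℝ).toLinearMap ∘ₗ φ
  have hker : ⨅ _ : Unit, LinearMap.ker ℓ ≤ LinearMap.ker K := fun f hf => by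
    simp_all [ℓ, K, sub_eq_zero]
  obtain ⟨r, hr⟩ := Submodule.mem_span_singleton.mp
    (by simpa using mem_span_of_iInf_ker_le_ker hker)
  exact ⟨r, fun f => by simpa [ℓ, K] using (LinearMap.congr_fun hr f).symm⟩

theorem apply_sub_mul_apply_eq_of_map_one (φ : C(X, ℝ) →ₗ[ℝ] C(Y, ℝ)) (hφ : φ 1 = 1)
    {x₀ x₁ : X} {y₀ y₁ : Y} {c d : ℝ} (hc : c ≠ 1)
    (h : ∀ f, f x₀ = c * f x₁ → φ f y₀ = d * φ f y₁) (f : C(X, ℝ)) :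
    φ f y₀ - d * φ f y₁ = (1 - d) / (1 - c) * (f x₀ - c * f x₁) := by
  obtain ⟨r, hr⟩ := exists_apply_sub_mul_apply_eq_mul φ h
  have hr1 : r = (1 - d) / (1 - c) := by
    have := hr 1
    simp only [hφ, one_apply, mul_one] at this
    rw [this, mul_div_cancel_right₀ _ (sub_ne_zero.mpr hc.symm)]
  rw [hr, hr1]

end ContinuousMap

namespace MeasureTheory.Measure

variable {Ω : Type*} [MeasurableSpace Ω] [MeasurableSingletonClass Ω]

theorem measureReal_add_indicator_eq_of_add_smul_dirac_eq {μ ν : Measure Ω} [IsFiniteMeasure μ]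
    [IsFiniteMeasure ν] {x y : Ω} {α β γ : ℝ≥0} (h : μ + α • dirac y = β • ν + γ • dirac x)
    (s : Set Ω) :
    μ.real s + α * s.indicator 1 y = β * ν.real s + γ * s.indicator 1 x := by
  have := congrArg (fun ρ => ρ.real s) h
  rw [measureReal_add_apply, measureReal_add_apply, measureReal_nnreal_smul_apply,
    measureReal_nnreal_smul_apply, measureReal_nnreal_smul_apply] at this
  have hI (z : Ω) : (s.indicator 1 z : ℝ≥0∞).toReal = s.indicator 1 z := by
    by_cases hz : z ∈ s <;> simp [hz]
  simpa [measureReal_def, dirac_apply, hI] using this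

variable [TopologicalSpace Ω] [BorelSpace Ω] [HasOuterApproxClosed Ω]

theorem add_smul_dirac_eq_of_integral_eq {μ ν : Measure Ω} [IsFiniteMeasure μ]
    [IsFiniteMeasure ν] {x y : Ω} {α β γ : ℝ≥0}
    (h : ∀ f : Ω →ᵇ ℝ, ∫ t, f t ∂μ + α * f y = β * ∫ t, f t ∂ν + γ * f x) :
    μ + α • dirac y = β • ν + γ • dirac x := by
  refine ext_of_forall_integral_eq_of_IsFiniteMeasure fun f => ?_
  rw [integral_add_measure (f.integrable _) (f.integrable _),
    integral_add_measure (f.integrable _) (f.integrable _), integral_smul_nnreal_measure,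
    integral_smul_nnreal_measure, integral_smul_nnreal_measure, integral_dirac, integral_dirac]
  exact h f

end MeasureTheory.Measure

theorem stmt9 (a k b : ℕ) (hk : 0 < k)
    (φ : C(unitInterval, ℝ) →ₗ[ℝ] C(unitInterval, ℝ))
    (hunital : φ 1 = 1)
    (hsub : ∀ f : C(unitInterval, ℝ),
      f 0 = (a : ℝ) / ((a : ℝ) + (k : ℝ)) * f 1 →
      φ f 0 = (b : ℝ) / ((b : ℝ) + (k : ℝ)) * φ f 1)
    (μ₀ μ₁ : Measure unitInterval)
    [IsProbabilityMeasure μ₀] [IsProbabilityMeasure μ₁]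
    (hμ₀ : ∀ f : C(unitInterval, ℝ), φ f 0 = ∫ t, f t ∂μ₀)
    (hμ₁ : ∀ f : C(unitInterval, ℝ), φ f 1 = ∫ t, f t ∂μ₁)
    (n : ℕ) (hn : 2 ≤ n) (X : Fin n → Set unitInterval)
    (hdisj : Pairwise (Function.onFun Disjoint X))
    (h0 : (0 : unitInterval) ∈ X ⟨0, by omega⟩)
    (h1 : (1 : unitInterval) ∈ X ⟨n - 1, by omega⟩) :
    (μ₀ (X ⟨0, by omega⟩)).toReal =
      (b : ℝ) / ((b : ℝ) + (k : ℝ)) * (μ₁ (X ⟨0, by omega⟩)).toReal +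
        ((a : ℝ) + (k : ℝ)) / ((b : ℝ) + (k : ℝ)) ∧
    (μ₀ (X ⟨n - 1, by omega⟩)).toReal =
      (b : ℝ) / ((b : ℝ) + (k : ℝ)) * (μ₁ (X ⟨n - 1, by omega⟩)).toReal -
        (a : ℝ) / ((b : ℝ) + (k : ℝ)) := by
  have hk' : (0 : ℝ) < k := by exact_mod_cast hk
  have hc : (a : ℝ) / (a + k) ≠ 1 := by
    rw [Ne, div_eq_one_iff_eq (by positivity)]; linarith
  have hratio : (1 - (b : ℝ) / (b + k)) / (1 - a / (a + k)) = (a + k) / (b + k) := by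
    rw [one_sub_div (by positivity), one_sub_div (by positivity), add_sub_cancel_left,
      add_sub_cancel_left]
    field_simp
  have hint (f : C(unitInterval, ℝ)) :
      ∫ t, f t ∂μ₀ + ((a / (b + k) : ℝ≥0) : ℝ) * f 1 =
        ((b / (b + k) : ℝ≥0) : ℝ) * ∫ t, f t ∂μ₁ + (((a + k) / (b + k) : ℝ≥0) : ℝ) * f 0 := by
    have := ContinuousMap.apply_sub_mul_apply_eq_of_map_one φ hunital hc hsub f
    rw [hμ₀, hμ₁, hratio] at this
    push_cast
    field_simp at this ⊢
    linear_combination this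
  have hμ := Measure.add_smul_dirac_eq_of_integral_eq fun f => hint f.toContinuousMap
  have hne : (⟨0, by omega⟩ : Fin n) ≠ ⟨n - 1, by omega⟩ := by
    rw [Ne, Fin.ext_iff]; simp only; omega
  have h1' : (1 : unitInterval) ∉ X ⟨0, by omega⟩ := (hdisj hne).notMem_of_mem_right h1
  have h0' : (0 : unitInterval) ∉ X ⟨n - 1, by omega⟩ := (hdisj hne).notMem_of_mem_left h0
  constructor
  · have := Measure.measureReal_add_indicator_eq_of_add_smul_dirac_eq hμ (X ⟨0, by omega⟩)
    simpa [measureReal_def, h0, h1'] using this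
  · have := Measure.measureReal_add_indicator_eq_of_add_smul_dirac_eq hμ (X ⟨n - 1, by omega⟩)
    simp only [measureReal_def, Set.indicator_of_mem h1, Set.indicator_of_notMem h0',
      Pi.one_apply] at this
    push_cast at this
    linarith
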